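/- Let α_i, β_i ∈ ℝ³ be linearly independent, let k_α, k_β, l_α, l_β > 0 and c_ω ≥ 0. Then the origin of the error system is locally exponentially stable: there exist δ > 0, C > 0 and λ > 0 such that for every t₀ ∈ ℝ, every continuous Ω : ℝ → ℝ³ with ‖Ω(t)‖ ≤ c_ω for all t, and every solution E of the error system on [t₀, ∞) with ‖E(t₀)‖ ≤ δ, one has ‖E(t)‖ ≤ C e^{−λ(t−t₀)} ‖E(t₀)‖ for all t ≥ t₀. -/

import Mathlib

/-!
The energy `V = lα‖Eα‖² + lβ‖Eβ‖² + ‖Eb‖²` satisfies `V̇ = −2(lα kα‖Eα‖² + lβ kβ‖Eβ‖²) ≤ 0`,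
so a trajectory starting near the origin stays in the region `‖Eb‖ ≤ 1`, but `V̇` does not see
`Eb`. The cross term `S = lα⟪Eα, Eb × αi⟫ + lβ⟪Eβ, Eb × βi⟫` supplies the missing decay:
`Ṡ ≥ lα‖Eb × αi‖² + lβ‖Eb × βi‖² − K(‖Eα‖ + ‖Eβ‖)‖E‖` there, and since `αi`, `βi` are linearly
independent the first part is at least `c‖Eb‖²`. For small `ε > 0` the function `W = V − εS` is
comparable to `‖E‖²` and `Ẇ ≤ −μ‖E‖²`, so Grönwall's inequality gives exponential decay.
-/

open scoped RealInnerProductSpace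
open Matrix Filter

noncomputable section

/-- ℝ³ with the Euclidean norm and inner product. -/
abbrev V3 : Type := EuclideanSpace ℝ (Fin 3)

/-- Identity identification of `V3` with plain functions `Fin 3 → ℝ`. -/
def toF (v : V3) : Fin 3 → ℝ := v

/-- Identity identification of plain functions `Fin 3 → ℝ` with `V3`. -/
def toE (v : Fin 3 → ℝ) : V3 := WithLp.toLp 2 v

/-- The cross product on ℝ³. -/
def cross (v w : V3) : V3 := toE (crossProduct (toF v) (toF w))

/-- `(Eα, Eβ, Eb)` is a solution on `[t₀, ∞)` of the error system
`Ėα = Eb × (αi + Eα) − kα Eα`, `Ėβ = Eb × (βi + Eβ) − kβ Eβ`,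
`Ėb = Ω × Eb + lα Eα × αi + lβ Eβ × βi`. -/
def IsSolution (αi βi : V3) (kα kβ lα lβ : ℝ) (Ω : ℝ → V3) (t₀ : ℝ)
    (Eα Eβ Eb : ℝ → V3) : Prop :=
  ∀ t ∈ Set.Ici t₀,
    HasDerivWithinAt Eα (cross (Eb t) (αi + Eα t) - kα • Eα t) (Set.Ici t₀) t ∧
    HasDerivWithinAt Eβ (cross (Eb t) (βi + Eβ t) - kβ • Eβ t) (Set.Ici t₀) t ∧
    HasDerivWithinAt Eb
      (cross (Ω t) (Eb t) + lα • cross (Eα t) αi + lβ • cross (Eβ t) βi) (Set.Ici t₀) t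

/-- The Euclidean norm of a state `(Eα, Eβ, Eb) ∈ ℝ³ × ℝ³ × ℝ³`. -/
def stateNorm (Eα Eβ Eb : V3) : ℝ := Real.sqrt (‖Eα‖ ^ 2 + ‖Eβ‖ ^ 2 + ‖Eb‖ ^ 2)

open Set Topology

def crossₗ : V3 →ₗ[ℝ] V3 →ₗ[ℝ] V3 :=
  (crossProduct.compl₁₂ (WithLp.linearEquiv 2 ℝ (Fin 3 → ℝ)).toLinearMap
    (WithLp.linearEquiv 2 ℝ (Fin 3 → ℝ)).toLinearMap).compr₂
    (WithLp.linearEquiv 2 ℝ (Fin 3 → ℝ)).symm.toLinearMap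

theorem cross_add_right (u v w : V3) : cross u (v + w) = cross u v + cross u w :=
  map_add (crossₗ u) v w

theorem toF_cross (v w : V3) : toF (cross v w) = crossProduct (toF v) (toF w) := rfl

theorem inner_eq_dotProduct_toF (u v : V3) : ⟪u, v⟫ = toF u ⬝ᵥ toF v := by
  simp [EuclideanSpace.inner_eq_star_dotProduct, toF, dotProduct_comm]

theorem inner_cross_self_right (u v : V3) : ⟪v, cross u v⟫ = 0 := by
  rw [inner_eq_dotProduct_toF, toF_cross, dot_cross_self]

theorem inner_cross_swap (u v w : V3) : ⟪u, cross v w⟫ = -⟪v, cross u w⟫ := by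
  rw [inner_eq_dotProduct_toF, inner_eq_dotProduct_toF, toF_cross, toF_cross,
    triple_product_permutation, ← cross_anticomm, dotProduct_neg]

theorem norm_cross_sq (u v : V3) : ‖cross u v‖ ^ 2 = ‖u‖ ^ 2 * ‖v‖ ^ 2 - ⟪u, v⟫ ^ 2 := by
  simp only [← real_inner_self_eq_norm_sq, inner_eq_dotProduct_toF, toF_cross, cross_dot_cross,
    dotProduct_comm (toF v) (toF u)]
  ring

theorem norm_cross_le (u v : V3) : ‖cross u v‖ ≤ ‖u‖ * ‖v‖ := by
  refine (pow_le_pow_iff_left₀ (norm_nonneg _) (by positivity) two_ne_zero).1 ?_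
  rw [norm_cross_sq, mul_pow]
  linarith [sq_nonneg ⟪u, v⟫]

theorem abs_inner_cross_le (u v w : V3) : |⟪u, cross v w⟫| ≤ ‖u‖ * (‖v‖ * ‖w‖) :=
  (abs_real_inner_le_norm _ _).trans
    (mul_le_mul_of_nonneg_left (norm_cross_le _ _) (norm_nonneg _))

theorem HasDerivWithinAt.cross_const {f : ℝ → V3} {f' : V3} {s : Set ℝ} {t : ℝ}
    (hf : HasDerivWithinAt f f' s t) (w : V3) :
    HasDerivWithinAt (fun x => cross (f x) w) (cross f' w) s t :=
  (crossₗ.flip w).toContinuousLinearMap.hasFDerivAt.comp_hasDerivWithinAt t hf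

theorem eq_zero_of_cross_eq_zero {α β v : V3} (h : LinearIndependent ℝ ![α, β])
    (hα : cross v α = 0) (hβ : cross v β = 0) : v = 0 := by
  by_contra hv
  have hv' : toF v ≠ 0 := fun h0 => hv (by simpa [toF] using h0)
  have parallel : ∀ w : V3, cross v w = 0 → ∃ a : ℝ, a • v = w := fun w hw => by
    have := mt crossProduct_ne_zero_iff_linearIndependent.2 (not_not.2 (congrArg toF hw))
    rw [LinearIndependent.pair_iff' hv'] at this
    push Not at this
    obtain ⟨a, ha⟩ := this
    exact ⟨a, WithLp.ofLp_injective 2 (by simpa [toF] using ha)⟩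
  obtain ⟨a, rfl⟩ := parallel α hα
  obtain ⟨b, rfl⟩ := parallel β hβ
  have := LinearIndependent.pair_iff.1 h b (-a) (by module)
  exact h.ne_zero 0 (by simp [neg_eq_zero.1 this.2])

theorem exists_pos_mul_norm_sq_le_norm_cross_sq_add {α β : V3}
    (h : LinearIndependent ℝ ![α, β]) :
    ∃ c > 0, ∀ v : V3, c * ‖v‖ ^ 2 ≤ ‖cross v α‖ ^ 2 + ‖cross v β‖ ^ 2 := by
  let f : V3 →ₗ[ℝ] V3 × V3 := (crossₗ.flip α).prod (crossₗ.flip β)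
  have hf : LinearMap.ker f = ⊥ := LinearMap.ker_eq_bot'.2 fun v hv =>
    eq_zero_of_cross_eq_zero h (congrArg Prod.fst hv) (congrArg Prod.snd hv)
  obtain ⟨c, hc, hcf⟩ := antilipschitzWith_iff_exists_mul_le_norm.1
    ((f.exists_antilipschitzWith hf).imp fun _ hK => hK.2)
  refine ⟨c ^ 2, by positivity, fun v => ?_⟩
  have hmax : ‖(cross v α, cross v β)‖ ^ 2 ≤ ‖cross v α‖ ^ 2 + ‖cross v β‖ ^ 2 := by
    rw [Prod.norm_def]
    rcases max_choice ‖cross v α‖ ‖cross v β‖ with hm | hm <;> rw [hm] <;>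
      nlinarith [sq_nonneg ‖cross v α‖, sq_nonneg ‖cross v β‖]
  calc c ^ 2 * ‖v‖ ^ 2 = (c * ‖v‖) ^ 2 := by ring
    _ ≤ ‖f v‖ ^ 2 := pow_le_pow_left₀ (by positivity) (hcf v) 2
    _ ≤ _ := hmax

theorem stateNorm_nonneg (a b c : V3) : 0 ≤ stateNorm a b c :=
  Real.sqrt_nonneg _

theorem stateNorm_sq (a b c : V3) : stateNorm a b c ^ 2 = ‖a‖ ^ 2 + ‖b‖ ^ 2 + ‖c‖ ^ 2 :=
  Real.sq_sqrt (by positivity)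

theorem le_mul_exp_of_hasDerivWithinAt_le_mul {f f' : ℝ → ℝ} {K a : ℝ}
    (hf : ∀ t ∈ Ici a, HasDerivWithinAt f (f' t) (Ici a) t)
    (bound : ∀ t ∈ Ici a, f' t ≤ K * f t) :
    ∀ t ∈ Ici a, f t ≤ f a * Real.exp (K * (t - a)) := by
  intro t ht
  have h := le_gronwallBound_of_liminf_deriv_right_le (δ := f a) (ε := 0) (b := t)
    (fun x hx => ((hf x hx.1).continuousWithinAt).mono Icc_subset_Ici_self)
    (fun x hx r hr => ((hf x hx.1).mono (Ici_subset_Ici.2 hx.1)).liminf_right_slope_le hr)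
    le_rfl (fun x hx => by simpa using bound x hx.1) t ⟨ht, le_rfl⟩
  rwa [gronwallBound_ε0] at h

theorem le_mul_exp_of_lyapunov {W W' n : ℝ → ℝ} {t₀ a₁ a₂ μ : ℝ} (ha₁ : 0 < a₁)
    (ha₂ : 0 < a₂) (hμ : 0 ≤ μ) (hn : ∀ t, 0 ≤ n t)
    (hW : ∀ t ∈ Ici t₀, HasDerivWithinAt W (W' t) (Ici t₀) t)
    (hW' : ∀ t ∈ Ici t₀, W' t ≤ -μ * n t ^ 2) (hlow : ∀ t, a₁ * n t ^ 2 ≤ W t)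
    (hup : ∀ t, W t ≤ a₂ * n t ^ 2) :
    ∀ t ∈ Ici t₀,
      n t ≤ Real.sqrt (a₂ / a₁) * Real.exp (-(μ / (2 * a₂)) * (t - t₀)) * n t₀ := by
  intro t ht
  have hdecay := le_mul_exp_of_hasDerivWithinAt_le_mul hW (K := -(μ / a₂)) (fun s hs => by
    have := mul_le_mul_of_nonneg_left (hup s) (div_nonneg hμ ha₂.le)
    rw [← mul_assoc, div_mul_cancel₀ _ ha₂.ne'] at this
    linarith [hW' s hs]) t ht
  have hexp :
      Real.exp (-(μ / a₂) * (t - t₀)) = Real.exp (-(μ / (2 * a₂)) * (t - t₀)) ^ 2 := by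
    rw [← Real.exp_nat_mul]; ring_nf
  refine (pow_le_pow_iff_left₀ (hn t) (by positivity [hn t₀]) two_ne_zero).1 ?_
  rw [mul_pow, mul_pow, Real.sq_sqrt (by positivity), ← hexp, div_mul_eq_mul_div,
    div_mul_eq_mul_div, le_div_iff₀ ha₁]
  nlinarith [hlow t, hup t₀, Real.exp_pos (-(μ / a₂) * (t - t₀))]

namespace ErrorSystem

variable (αi βi : V3) (kα kβ lα lβ : ℝ)

/- `vel αi kα` and `vel βi kβ` are the right-hand sides of the equations for `Eα` and `Eβ`,
`velb αi βi lα lβ` the one for `Eb`. -/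
def vel (α : V3) (k : ℝ) (a c : V3) : V3 := cross c (α + a) - k • a

def velb (ω a b c : V3) : V3 := cross ω c + lα • cross a αi + lβ • cross b βi

def energy (a b c : V3) : ℝ := lα * ‖a‖ ^ 2 + lβ * ‖b‖ ^ 2 + ‖c‖ ^ 2

def crossTerm (a b c : V3) : ℝ := lα * ⟪a, cross c αi⟫ + lβ * ⟪b, cross c βi⟫

def crossTermDeriv (ω a b c : V3) : ℝ :=
  lα * (⟪a, cross (velb αi βi lα lβ ω a b c) αi⟫ + ⟪vel αi kα a c, cross c αi⟫) +
    lβ * (⟪b, cross (velb αi βi lα lβ ω a b c) βi⟫ + ⟪vel βi kβ b c, cross c βi⟫)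

theorem energy_deriv_eq (ω a b c : V3) :
    lα * (2 * ⟪a, vel αi kα a c⟫) + lβ * (2 * ⟪b, vel βi kβ b c⟫) +
      2 * ⟪c, velb αi βi lα lβ ω a b c⟫ =
        -(2 * (lα * kα * ‖a‖ ^ 2 + lβ * kβ * ‖b‖ ^ 2)) := by
  simp only [vel, velb, cross_add_right, inner_sub_right, inner_add_right, inner_smul_right,
    inner_cross_self_right, inner_cross_swap c a, inner_cross_swap c b,
    real_inner_self_eq_norm_sq]
  ring

theorem min_mul_stateNorm_sq_le_energy (a b c : V3) :
    min (min lα lβ) 1 * stateNorm a b c ^ 2 ≤ energy lα lβ a b c := by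
  rw [stateNorm_sq, energy, mul_add, mul_add]
  gcongr
  · exact (min_le_left _ _).trans (min_le_left _ _)
  · exact (min_le_left _ _).trans (min_le_right _ _)
  · exact mul_le_of_le_one_left (sq_nonneg _) (min_le_right _ _)

theorem energy_le_mul_stateNorm_sq (hlα : 0 ≤ lα) (hlβ : 0 ≤ lβ) (a b c : V3) :
    energy lα lβ a b c ≤ (lα + lβ + 1) * stateNorm a b c ^ 2 := by
  rw [stateNorm_sq, energy]
  nlinarith [mul_nonneg hlα (sq_nonneg ‖b‖), mul_nonneg hlα (sq_nonneg ‖c‖),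
    mul_nonneg hlβ (sq_nonneg ‖a‖), mul_nonneg hlβ (sq_nonneg ‖c‖), sq_nonneg ‖a‖,
    sq_nonneg ‖b‖]

theorem abs_crossTerm_le (hlα : 0 ≤ lα) (hlβ : 0 ≤ lβ) (a b c : V3) :
    |crossTerm αi βi lα lβ a b c| ≤ (lα * ‖αi‖ + lβ * ‖βi‖) * stateNorm a b c ^ 2 := by
  have hα := abs_inner_cross_le a c αi
  have hβ := abs_inner_cross_le b c βi
  have hac : ‖a‖ * ‖c‖ ≤ stateNorm a b c ^ 2 := by
    rw [stateNorm_sq]; nlinarith [sq_nonneg (‖a‖ - ‖c‖), sq_nonneg ‖b‖]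
  have hbc : ‖b‖ * ‖c‖ ≤ stateNorm a b c ^ 2 := by
    rw [stateNorm_sq]; nlinarith [sq_nonneg (‖b‖ - ‖c‖), sq_nonneg ‖a‖]
  calc |crossTerm αi βi lα lβ a b c|
      ≤ lα * |⟪a, cross c αi⟫| + lβ * |⟪b, cross c βi⟫| := by
        refine (abs_add_le _ _).trans ?_
        rw [abs_mul, abs_mul, abs_of_nonneg hlα, abs_of_nonneg hlβ]
    _ ≤ lα * (‖a‖ * (‖c‖ * ‖αi‖)) + lβ * (‖b‖ * (‖c‖ * ‖βi‖)) := by gcongr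
    _ = lα * ‖αi‖ * (‖a‖ * ‖c‖) + lβ * ‖βi‖ * (‖b‖ * ‖c‖) := by ring
    _ ≤ _ := by rw [add_mul]; gcongr

def strictLyapunov (ε : ℝ) (a b c : V3) : ℝ :=
  energy lα lβ a b c - ε * crossTerm αi βi lα lβ a b c

theorem strictLyapunov_bounds {ε : ℝ} (hlα : 0 ≤ lα) (hlβ : 0 ≤ lβ) (hε : 0 ≤ ε)
    (hεS : ε * (lα * ‖αi‖ + lβ * ‖βi‖) ≤ min (min lα lβ) 1 / 2) (a b c : V3) :
    min (min lα lβ) 1 / 2 * stateNorm a b c ^ 2 ≤ strictLyapunov αi βi lα lβ ε a b c ∧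
      strictLyapunov αi βi lα lβ ε a b c ≤
        (lα + lβ + 1 + min (min lα lβ) 1 / 2) * stateNorm a b c ^ 2 := by
  have hS := abs_le.1 (abs_crossTerm_le αi βi lα lβ hlα hlβ a b c)
  have hV₁ := min_mul_stateNorm_sq_le_energy lα lβ a b c
  have hV₂ := energy_le_mul_stateNorm_sq lα lβ hlα hlβ a b c
  have hεS' := mul_le_mul_of_nonneg_right hεS (sq_nonneg (stateNorm a b c))
  rw [strictLyapunov]
  constructor <;>
    linarith [mul_le_mul_of_nonneg_left hS.1 hε, mul_le_mul_of_nonneg_left hS.2 hε]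

theorem norm_cross_sq_sub_le_inner_vel (α a c c' : V3) {k : ℝ} (hk : 0 ≤ k) (hc : ‖c‖ ≤ 1) :
    ‖cross c α‖ ^ 2 - ‖α‖ * ‖a‖ * (‖c'‖ + (1 + k) * ‖c‖) ≤
      ⟪a, cross c' α⟫ + ⟪vel α k a c, cross c α⟫ := by
  have hsplit : vel α k a c = cross c α + (cross c a - k • a) := by
    rw [vel, cross_add_right]; abel
  have h₁ := neg_le_of_abs_le (abs_inner_cross_le a c' α)
  have hnorm : ‖cross c a - k • a‖ ≤ (‖c‖ + k) * ‖a‖ := by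
    refine (norm_sub_le _ _).trans ?_
    rw [norm_smul, Real.norm_of_nonneg hk, add_mul]
    gcongr
    exact norm_cross_le c a
  have h₂ : -((‖c‖ + k) * ‖a‖ * (‖c‖ * ‖α‖)) ≤ ⟪cross c a - k • a, cross c α⟫ :=
    neg_le_of_abs_le ((abs_real_inner_le_norm _ _).trans
      (mul_le_mul hnorm (norm_cross_le c α) (norm_nonneg _) (by positivity)))
  have hc₂ := mul_le_mul_of_nonneg_left (mul_le_of_le_one_left (norm_nonneg c) hc)
    (mul_nonneg (norm_nonneg a) (norm_nonneg α))
  rw [hsplit, inner_add_left, real_inner_self_eq_norm_sq]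
  linarith

theorem norm_velb_le (hlα : 0 ≤ lα) (hlβ : 0 ≤ lβ) (ω a b c : V3) :
    ‖velb αi βi lα lβ ω a b c‖ ≤ ‖ω‖ * ‖c‖ + lα * ‖αi‖ * ‖a‖ + lβ * ‖βi‖ * ‖b‖ := by
  refine (norm_add₃_le ..).trans ?_
  rw [norm_smul, norm_smul, Real.norm_of_nonneg hlα, Real.norm_of_nonneg hlβ, mul_assoc,
    mul_assoc, mul_comm ‖αi‖, mul_comm ‖βi‖]
  gcongr <;> exact norm_cross_le _ _

theorem exists_le_crossTermDeriv (hkα : 0 ≤ kα) (hkβ : 0 ≤ kβ) (hlα : 0 ≤ lα)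
    (hlβ : 0 ≤ lβ) (cω : ℝ) :
    ∃ K, ∀ ω a b c : V3, ‖ω‖ ≤ cω → ‖c‖ ≤ 1 →
      lα * ‖cross c αi‖ ^ 2 + lβ * ‖cross c βi‖ ^ 2 - K * (‖a‖ + ‖b‖) * (‖a‖ + ‖b‖ + ‖c‖) ≤
        crossTermDeriv αi βi kα kβ lα lβ ω a b c := by
  set P := lα * ‖αi‖
  set Q := lβ * ‖βi‖
  refine ⟨(P + Q) * (cω + P + Q + 1 + kα + kβ), fun ω a b c hω hc => ?_⟩
  set v := velb αi βi lα lβ ω a b c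
  have hα := mul_le_mul_of_nonneg_left (norm_cross_sq_sub_le_inner_vel αi a c v hkα hc) hlα
  have hβ := mul_le_mul_of_nonneg_left (norm_cross_sq_sub_le_inner_vel βi b c v hkβ hc) hlβ
  have hv := norm_velb_le αi βi lα lβ hlα hlβ ω a b c
  have hP : 0 ≤ P := by positivity
  have hQ : 0 ≤ Q := by positivity
  have hcω : 0 ≤ cω := (norm_nonneg ω).trans hω
  have hx := norm_nonneg a
  have hy := norm_nonneg b
  have hz := norm_nonneg c
  have herr : P * ‖a‖ * (‖v‖ + (1 + kα) * ‖c‖) + Q * ‖b‖ * (‖v‖ + (1 + kβ) * ‖c‖) ≤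
      (P + Q) * (cω + P + Q + 1 + kα + kβ) * (‖a‖ + ‖b‖) * (‖a‖ + ‖b‖ + ‖c‖) :=
    calc _ ≤ (P * ‖a‖ + Q * ‖b‖) * (‖v‖ + (1 + kα + kβ) * ‖c‖) := by
          nlinarith [mul_nonneg (mul_nonneg hP hx) (mul_nonneg hkβ hz),
            mul_nonneg (mul_nonneg hQ hy) (mul_nonneg hkα hz)]
      _ ≤ (P * ‖a‖ + Q * ‖b‖) * ((cω + P + Q + 1 + kα + kβ) * (‖a‖ + ‖b‖ + ‖c‖)) := by
          gcongr
          nlinarith [mul_le_mul_of_nonneg_right hω hz, mul_nonneg hcω (add_nonneg hx hy),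
            mul_nonneg hP (add_nonneg hy hz), mul_nonneg hQ (add_nonneg hx hz),
            mul_nonneg (add_nonneg (add_nonneg hkα hkβ) zero_le_one) (add_nonneg hx hy)]
      _ ≤ ((P + Q) * (‖a‖ + ‖b‖)) * ((cω + P + Q + 1 + kα + kβ) * (‖a‖ + ‖b‖ + ‖c‖)) := by
          gcongr
          nlinarith [mul_nonneg hP hy, mul_nonneg hQ hx]
      _ = _ := by ring
  rw [crossTermDeriv]
  linarith

theorem neg_two_mul_sub_mul_le {κ c K ε x y z D : ℝ} (hκ : 0 ≤ κ) (hc : 0 < c) (hε : 0 ≤ ε)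
    (hεK : ε * (K + K ^ 2 / (2 * c)) ≤ κ / 2)
    (hD : c * z ^ 2 - K * (x + y) * (x + y + z) ≤ D) :
    -(2 * κ * (x ^ 2 + y ^ 2)) - ε * D ≤ -min κ (ε * c / 2) * (x ^ 2 + y ^ 2 + z ^ 2) := by
  have young : K * (x + y) * z ≤ c / 2 * z ^ 2 + K ^ 2 / (2 * c) * (x + y) ^ 2 := by
    have h : 0 ≤ (c * z - K * (x + y)) ^ 2 / (2 * c) := by positivity
    have e : (c * z - K * (x + y)) ^ 2 / (2 * c) =
        c / 2 * z ^ 2 - K * (x + y) * z + K ^ 2 / (2 * c) * (x + y) ^ 2 := by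
      field_simp; ring
    linarith
  nlinarith [mul_le_mul_of_nonneg_left hD hε, mul_le_mul_of_nonneg_left young hε,
    mul_le_mul_of_nonneg_right hεK (sq_nonneg (x + y)), mul_nonneg hκ (sq_nonneg (x - y)),
    mul_le_mul_of_nonneg_right (min_le_left κ (ε * c / 2))
      (add_nonneg (sq_nonneg x) (sq_nonneg y)),
    mul_le_mul_of_nonneg_right (min_le_right κ (ε * c / 2)) (sq_nonneg z)]

theorem exists_strictLyapunov (hind : LinearIndependent ℝ ![αi, βi]) (hkα : 0 < kα)
    (hkβ : 0 < kβ) (hlα : 0 < lα) (hlβ : 0 < lβ) (cω : ℝ) :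
    ∃ ε a₁ a₂ μ : ℝ, 0 < a₁ ∧ 0 < a₂ ∧ 0 < μ ∧
      (∀ a b c : V3, a₁ * stateNorm a b c ^ 2 ≤ strictLyapunov αi βi lα lβ ε a b c ∧
        strictLyapunov αi βi lα lβ ε a b c ≤ a₂ * stateNorm a b c ^ 2) ∧
      ∀ ω a b c : V3, ‖ω‖ ≤ cω → ‖c‖ ≤ 1 →
        -(2 * (lα * kα * ‖a‖ ^ 2 + lβ * kβ * ‖b‖ ^ 2)) -
          ε * crossTermDeriv αi βi kα kβ lα lβ ω a b c ≤ -μ * stateNorm a b c ^ 2 := by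
  obtain ⟨c₀, hc₀, hcoer⟩ := exists_pos_mul_norm_sq_le_norm_cross_sq_add hind
  obtain ⟨K, hK⟩ :=
    exists_le_crossTermDeriv αi βi kα kβ lα lβ hkα.le hkβ.le hlα.le hlβ.le cω
  set ℓ := min (min lα lβ) 1
  set κ := min (lα * kα) (lβ * kβ)
  set c₁ := min lα lβ * c₀
  have hκ : 0 < κ := by positivity
  have hc₁ : 0 < c₁ := by positivity
  have small (C D : ℝ) (hD : 0 < D) : ∀ᶠ ε in 𝓝[>] (0 : ℝ), ε * C < D :=
    (((continuous_id.mul continuous_const).tendsto' 0 0 (zero_mul C)).eventually_lt_const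
      hD).filter_mono nhdsWithin_le_nhds
  obtain ⟨ε, ⟨hεS, hεK⟩, hε⟩ :=
    ((small (lα * ‖αi‖ + lβ * ‖βi‖) (ℓ / 2) (by positivity)).and
      (small (K + K ^ 2 / (2 * c₁)) (κ / 2) (by positivity))).and self_mem_nhdsWithin |>.exists
  refine ⟨ε, ℓ / 2, lα + lβ + 1 + ℓ / 2, min κ (ε * c₁ / 2), by positivity, by positivity,
    lt_min hκ (by have : 0 < ε := hε; positivity),
    strictLyapunov_bounds αi βi lα lβ hlα.le hlβ.le (le_of_lt hε) hεS.le,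
    fun ω a b c hω hc => ?_⟩
  have hcoer' : c₁ * ‖c‖ ^ 2 ≤ lα * ‖cross c αi‖ ^ 2 + lβ * ‖cross c βi‖ ^ 2 := by
    have := mul_le_mul_of_nonneg_left (hcoer c) (le_min hlα.le hlβ.le)
    nlinarith [min_le_left lα lβ, min_le_right lα lβ, sq_nonneg ‖cross c αi‖,
      sq_nonneg ‖cross c βi‖]
  have hV : -(2 * (lα * kα * ‖a‖ ^ 2 + lβ * kβ * ‖b‖ ^ 2)) ≤
      -(2 * κ * (‖a‖ ^ 2 + ‖b‖ ^ 2)) := by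
    nlinarith [mul_le_mul_of_nonneg_right (min_le_left (lα * kα) (lβ * kβ)) (sq_nonneg ‖a‖),
      mul_le_mul_of_nonneg_right (min_le_right (lα * kα) (lβ * kβ)) (sq_nonneg ‖b‖)]
  rw [stateNorm_sq]
  exact (sub_le_sub_right hV _).trans
    (neg_two_mul_sub_mul_le hκ.le hc₁ (le_of_lt hε) hεK.le (by linarith [hK ω a b c hω hc]))

section Solution

variable {αi βi kα kβ lα lβ} {Ω : ℝ → V3} {t₀ t : ℝ} {Eα Eβ Eb : ℝ → V3}

theorem _root_.IsSolution.hasDerivWithinAt_energy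
    (hsol : IsSolution αi βi kα kβ lα lβ Ω t₀ Eα Eβ Eb) (ht : t ∈ Ici t₀) :
    HasDerivWithinAt (fun s => energy lα lβ (Eα s) (Eβ s) (Eb s))
      (-(2 * (lα * kα * ‖Eα t‖ ^ 2 + lβ * kβ * ‖Eβ t‖ ^ 2))) (Ici t₀) t := by
  obtain ⟨ha, hb, hc⟩ := hsol t ht
  rw [← energy_deriv_eq αi βi kα kβ lα lβ (Ω t)]
  exact ((ha.norm_sq.const_mul lα).add (hb.norm_sq.const_mul lβ)).add hc.norm_sq

theorem _root_.IsSolution.hasDerivWithinAt_crossTerm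
    (hsol : IsSolution αi βi kα kβ lα lβ Ω t₀ Eα Eβ Eb) (ht : t ∈ Ici t₀) :
    HasDerivWithinAt (fun s => crossTerm αi βi lα lβ (Eα s) (Eβ s) (Eb s))
      (crossTermDeriv αi βi kα kβ lα lβ (Ω t) (Eα t) (Eβ t) (Eb t)) (Ici t₀) t := by
  obtain ⟨ha, hb, hc⟩ := hsol t ht
  exact ((ha.inner ℝ (hc.cross_const αi)).const_mul lα).add
    ((hb.inner ℝ (hc.cross_const βi)).const_mul lβ)

theorem _root_.IsSolution.energy_le (hsol : IsSolution αi βi kα kβ lα lβ Ω t₀ Eα Eβ Eb)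
    (hkα : 0 ≤ kα) (hkβ : 0 ≤ kβ) (hlα : 0 ≤ lα) (hlβ : 0 ≤ lβ) (ht : t ∈ Ici t₀) :
    energy lα lβ (Eα t) (Eβ t) (Eb t) ≤ energy lα lβ (Eα t₀) (Eβ t₀) (Eb t₀) := by
  simpa using le_mul_exp_of_hasDerivWithinAt_le_mul (K := 0)
    (fun s hs => hsol.hasDerivWithinAt_energy hs)
    (fun s _ => by rw [zero_mul, neg_nonpos]; positivity) t ht

theorem _root_.IsSolution.norm_le_one (hsol : IsSolution αi βi kα kβ lα lβ Ω t₀ Eα Eβ Eb)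
    (hkα : 0 ≤ kα) (hkβ : 0 ≤ kβ) (hlα : 0 ≤ lα) (hlβ : 0 ≤ lβ)
    (h₀ : stateNorm (Eα t₀) (Eβ t₀) (Eb t₀) ≤ (Real.sqrt (lα + lβ + 1))⁻¹) (ht : t ∈ Ici t₀) :
    ‖Eb t‖ ≤ 1 := by
  have hN₀ : stateNorm (Eα t₀) (Eβ t₀) (Eb t₀) ^ 2 ≤ (lα + lβ + 1)⁻¹ := by
    have := pow_le_pow_left₀ (stateNorm_nonneg _ _ _) h₀ 2
    rwa [inv_pow, Real.sq_sqrt (by positivity)] at this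
  refine (sq_le_one_iff₀ (norm_nonneg _)).1 ?_
  calc ‖Eb t‖ ^ 2 ≤ energy lα lβ (Eα t) (Eβ t) (Eb t) :=
        le_add_of_nonneg_left (by positivity)
    _ ≤ energy lα lβ (Eα t₀) (Eβ t₀) (Eb t₀) := hsol.energy_le hkα hkβ hlα hlβ ht
    _ ≤ (lα + lβ + 1) * stateNorm (Eα t₀) (Eβ t₀) (Eb t₀) ^ 2 :=
      energy_le_mul_stateNorm_sq lα lβ hlα hlβ _ _ _
    _ ≤ (lα + lβ + 1) * (lα + lβ + 1)⁻¹ := by gcongr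
    _ = 1 := mul_inv_cancel₀ (by positivity)

end Solution

end ErrorSystem

theorem error_system_local_exponential_stability_general
    (αi βi : V3) (hind : LinearIndependent ℝ ![αi, βi])
    (kα kβ lα lβ : ℝ) (hkα : 0 < kα) (hkβ : 0 < kβ) (hlα : 0 < lα) (hlβ : 0 < lβ)
    (cω : ℝ) :
    ∃ δ > (0 : ℝ), ∃ C > (0 : ℝ), ∃ lam > (0 : ℝ),
      ∀ (t₀ : ℝ) (Ω : ℝ → V3), Continuous Ω → (∀ t, ‖Ω t‖ ≤ cω) →
        ∀ Eα Eβ Eb : ℝ → V3, IsSolution αi βi kα kβ lα lβ Ω t₀ Eα Eβ Eb →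
          stateNorm (Eα t₀) (Eβ t₀) (Eb t₀) ≤ δ →
          ∀ t ≥ t₀, stateNorm (Eα t) (Eβ t) (Eb t)
            ≤ C * Real.exp (-lam * (t - t₀)) * stateNorm (Eα t₀) (Eβ t₀) (Eb t₀) := by
  obtain ⟨ε, a₁, a₂, μ, ha₁, ha₂, hμ, hW, hW'⟩ :=
    ErrorSystem.exists_strictLyapunov αi βi kα kβ lα lβ hind hkα hkβ hlα hlβ cω
  refine ⟨(Real.sqrt (lα + lβ + 1))⁻¹, by positivity, Real.sqrt (a₂ / a₁), by positivity,
    μ / (2 * a₂), by positivity, ?_⟩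
  intro t₀ Ω _ hΩ Eα Eβ Eb hsol h₀ t ht
  have hEb (s : ℝ) (hs : s ∈ Ici t₀) : ‖Eb s‖ ≤ 1 :=
    hsol.norm_le_one hkα.le hkβ.le hlα.le hlβ.le h₀ hs
  exact le_mul_exp_of_lyapunov ha₁ ha₂ hμ.le (fun s => stateNorm_nonneg _ _ _)
    (fun s hs => (hsol.hasDerivWithinAt_energy hs).sub
      ((hsol.hasDerivWithinAt_crossTerm hs).const_mul ε))
    (fun s hs => hW' _ _ _ _ (hΩ s) (hEb s hs)) (fun s => (hW _ _ _).1)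
    (fun s => (hW _ _ _).2)
    t ht

/-- The origin of the error system is locally exponentially stable. -/
theorem error_system_local_exponential_stability
    (αi βi : V3) (hind : LinearIndependent ℝ ![αi, βi])
    (kα kβ lα lβ : ℝ) (hkα : 0 < kα) (hkβ : 0 < kβ) (hlα : 0 < lα) (hlβ : 0 < lβ)
    (cω : ℝ) (hcω : 0 ≤ cω) :
    ∃ δ > (0 : ℝ), ∃ C > (0 : ℝ), ∃ lam > (0 : ℝ),
      ∀ (t₀ : ℝ) (Ω : ℝ → V3), Continuous Ω → (∀ t, ‖Ω t‖ ≤ cω) →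
        ∀ Eα Eβ Eb : ℝ → V3, IsSolution αi βi kα kβ lα lβ Ω t₀ Eα Eβ Eb →
          stateNorm (Eα t₀) (Eβ t₀) (Eb t₀) ≤ δ →
          ∀ t ≥ t₀, stateNorm (Eα t) (Eβ t) (Eb t)
            ≤ C * Real.exp (-lam * (t - t₀)) * stateNorm (Eα t₀) (Eβ t₀) (Eb t₀) :=
  error_system_local_exponential_stability_general αi βi hind kα kβ lα lβ hkα hkβ hlα hlβ cω
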